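/- (Intelligence gap.) Assume Γ_1 > 0, A has at least two elements, and there are percepts e⁰, e¹ ∈ E with r(e⁰) = 0 and r(e¹) = 1. Fix α ∈ A and let ν be the CCS in which the first action decides everything: if a_1 = α then deterministically e_i = e¹ for all i, and if a_1 ≠ α then deterministically e_i = e⁰ for all i. Let ξ be any CCS and ξ' := 0.999·ν + 0.001·ξ. Then every policy π with π(ϵ) = α has Υ_{ξ'}(π) ≥ 0.999, every policy π with π(ϵ) ≠ α has Υ_{ξ'}(π) ≤ 0.001, and consequently no policy has Υ_{ξ'}(π) in the open interval (0.001, 0.999). -/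

import Mathlib

/-!
Write `c := if π ϵ = α then e¹ else e⁰`. In `ξ' = 0.999 ν + 0.001 ξ` the `ν`-part of every
inner sum of `V^π_{ξ'}` equals `0.999 r(c)`, while the `ξ`-part lies in `[0, 0.001 ξ(ϵ)]`
by chronology. The normalised discounted average of these sums, divided by
`ξ'(ϵ) = 0.999 + 0.001 ξ(ϵ) ∈ (0, 1]`, is therefore `≥ 0.999` when `c = e¹` and
`≤ 0.001 ξ(ϵ) / (0.999 + 0.001 ξ(ϵ)) ≤ 0.001` when `c = e⁰`.
-/

open scoped Classical

/-- A history: a finite alternating sequence of action–percept pairs. -/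
abbrev Hist (A E : Type*) := List (A × E)

/-- A policy maps histories to actions. -/
abbrev Policy (A E : Type*) := Hist A E → A

/-- A chronological conditional semimeasure (CCS, environment):
values in `[0,1]`, and the chronological semimeasure condition. -/
structure CCS (A E : Type*) [Fintype E] where
  val : Hist A E → ℝ
  nonneg : ∀ h, 0 ≤ val h
  le_one : ∀ h, val h ≤ 1
  chrono : ∀ (h : Hist A E) (a : A), (∑ e : E, val (h ++ [(a, e)])) ≤ val h

/-- `Gam γ t = Γ_t = ∑_{i ≥ t} γ_i`, the discount normalization factor. -/
noncomputable def Gam (γ : ℕ → ℝ) (t : ℕ) : ℝ := ∑' i : ℕ, γ (t + i)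

/-- Extend a history by a list of percepts, with actions chosen by the policy `π`. -/
def extendH {A E : Type*} (π : Policy A E) : Hist A E → List E → Hist A E
  | h, [] => h
  | h, e :: es => extendH π (h ++ [(π h, e)]) es

/-- The value `V^π_ν(ae_{<t})` of policy `π` in environment `ν` given history `h = ae_{<t}`
(with `t = h.length + 1`); `0` whenever `Γ_t ≤ 0` or `ν(e_{<t} ∣ a_{<t}) ≤ 0`. -/
noncomputable def V {A E : Type*} [Fintype E] (γ : ℕ → ℝ) (r : E → ℝ)
    (π : Policy A E) (ν : CCS A E) (h : Hist A E) : ℝ :=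
  if 0 < Gam γ (h.length + 1) ∧ 0 < ν.val h then
    (1 / (Gam γ (h.length + 1) * ν.val h)) *
      ∑' n : ℕ, γ (h.length + 1 + n) *
        ∑ es : Fin (n + 1) → E,
          r (es (Fin.last n)) * ν.val (extendH π h (List.ofFn es))
  else 0

/-- The value `V^π_ν(h a)` of a history ending in the action `a`:
the action at time `t` is `a`, and `π` is followed from time `t+1` on. -/
noncomputable def Vact {A E : Type*} [Fintype E] (γ : ℕ → ℝ) (r : E → ℝ)
    (π : Policy A E) (ν : CCS A E) (h : Hist A E) (a : A) : ℝ :=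
  V γ r (fun h' => if h' = h then a else π h') ν h

/-- The optimal value `V^*_ν(h) = sup_π V^π_ν(h)`. -/
noncomputable def VOpt {A E : Type*} [Fintype E] (γ : ℕ → ℝ) (r : E → ℝ)
    (ν : CCS A E) (h : Hist A E) : ℝ :=
  ⨆ π : Policy A E, V γ r π ν h

/-- The optimal value `V^*_ν(h a)` of a history ending in an action. -/
noncomputable def VOptAct {A E : Type*} [Fintype E] (γ : ℕ → ℝ) (r : E → ℝ)
    (ν : CCS A E) (h : Hist A E) (a : A) : ℝ :=
  ⨆ π : Policy A E, Vact γ r π ν h a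

/-- A history is consistent with `π` iff each of its actions is the one chosen by `π`. -/
def Consistent {A E : Type*} (π : Policy A E) (h : Hist A E) : Prop :=
  ∀ (k : ℕ) (hk : k < h.length), (h.get ⟨k, hk⟩).1 = π (h.take k)

/-- The environment in which the first action decides everything: if the first action
is `α`, it deterministically emits `eSame` forever; otherwise `eOther` forever. -/
noncomputable def firstEnv {A E : Type*} (α : A) (eSame eOther : E) : Hist A E → ℝ
  | [] => 1
  | (a, e) :: rest =>
    if a = α then (if e = eSame ∧ ∀ p ∈ rest, p.2 = eSame then 1 else 0)
    else (if e = eOther ∧ ∀ p ∈ rest, p.2 = eOther then 1 else 0)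

section
variable {A E : Type*}

lemma extendH_eq_append (π : Policy A E) : ∀ (h : Hist A E) (l : List E),
    ∃ t, extendH π h l = h ++ t ∧ t.map Prod.snd = l
  | h, [] => ⟨[], by simp [extendH]⟩
  | h, e :: l => by
    obtain ⟨t, ht, hl⟩ := extendH_eq_append π (h ++ [(π h, e)]) l
    exact ⟨(π h, e) :: t, by simp [extendH, ht], by simp [hl]⟩

lemma firstEnv_cons (α : A) (eS eO : E) (p : A × E) (t : Hist A E) :
    firstEnv α eS eO (p :: t) =
      if ∀ x ∈ (p :: t).map Prod.snd, x = if p.1 = α then eS else eO then 1 else 0 := by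
  obtain ⟨a, e⟩ := p
  by_cases ha : a = α <;>
    simp only [firstEnv, ha, if_true, if_false, List.map_cons, List.forall_mem_cons,
      List.forall_mem_map]

lemma firstEnv_extendH_ofFn (α : A) (eS eO : E) (π : Policy A E) {n : ℕ}
    (es : Fin (n + 1) → E) :
    firstEnv α eS eO (extendH π [] (List.ofFn es)) =
      if es = fun _ => if π [] = α then eS else eO then 1 else 0 := by
  obtain ⟨t, ht, hl⟩ := extendH_eq_append π [(π [], es 0)] (List.ofFn fun i => es i.succ)
  have hcons : extendH π [] (List.ofFn es) = (π [], es 0) :: t := by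
    rw [List.ofFn_succ]; exact ht
  rw [hcons, firstEnv_cons, List.map_cons, hl, ← List.ofFn_succ]
  simp [funext_iff, Fin.forall_fin_succ]

variable [Fintype E]

lemma sum_extendH_le (μ : CCS A E) (π : Policy A E) :
    ∀ (n : ℕ) (h : Hist A E), ∑ es : Fin n → E, μ.val (extendH π h (List.ofFn es)) ≤ μ.val h
  | 0, h => by simp [extendH]
  | n + 1, h =>
    calc ∑ es : Fin (n + 1) → E, μ.val (extendH π h (List.ofFn es))
        = ∑ p : E × (Fin n → E), μ.val (extendH π (h ++ [(π h, p.1)]) (List.ofFn p.2)) :=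
          Fintype.sum_equiv (Fin.consEquiv fun _ => E).symm _ _ fun es => by
            rw [List.ofFn_succ]; rfl
      _ = ∑ e : E, ∑ es : Fin n → E, μ.val (extendH π (h ++ [(π h, e)]) (List.ofFn es)) :=
          Fintype.sum_prod_type _
      _ ≤ ∑ e : E, μ.val (h ++ [(π h, e)]) :=
          Finset.sum_le_sum fun e _ => sum_extendH_le μ π n _
      _ ≤ μ.val h := μ.chrono h (π h)

/-- `rewardMass r π f h n = ∑_{e_{t:t+n}} r(e_{t+n}) f(ae_{1:t+n})`, where `h = ae_{<t}` is
continued by `π`: the inner sum of `V` at time `t + n`. -/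
noncomputable def rewardMass (r : E → ℝ) (π : Policy A E) (f : Hist A E → ℝ) (h : Hist A E)
    (n : ℕ) : ℝ :=
  ∑ es : Fin (n + 1) → E, r (es (Fin.last n)) * f (extendH π h (List.ofFn es))

variable {r : E → ℝ} {π : Policy A E} {h : Hist A E} {n : ℕ}

lemma rewardMass_mul_add_mul (a b : ℝ) (f g : Hist A E → ℝ) :
    rewardMass r π (fun h => a * f h + b * g h) h n =
      a * rewardMass r π f h n + b * rewardMass r π g h n := by
  rw [rewardMass, rewardMass, rewardMass, Finset.mul_sum, Finset.mul_sum,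
    ← Finset.sum_add_distrib]
  exact Finset.sum_congr rfl fun _ _ => by ring

lemma rewardMass_nonneg (hr : ∀ e, 0 ≤ r e) (μ : CCS A E) : 0 ≤ rewardMass r π μ.val h n :=
  Finset.sum_nonneg fun _ _ => mul_nonneg (hr _) (μ.nonneg _)

lemma rewardMass_le_val (hr : ∀ e, r e ≤ 1) (μ : CCS A E) :
    rewardMass r π μ.val h n ≤ μ.val h :=
  calc rewardMass r π μ.val h n ≤ ∑ es : Fin (n + 1) → E, μ.val (extendH π h (List.ofFn es)) :=
        Finset.sum_le_sum fun _ _ => mul_le_of_le_one_left (μ.nonneg _) (hr _)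
    _ ≤ μ.val h := sum_extendH_le μ π (n + 1) h

lemma rewardMass_firstEnv (α : A) (eS eO : E) :
    rewardMass r π (firstEnv α eS eO) [] n = r (if π [] = α then eS else eO) := by
  simp only [rewardMass, firstEnv_extendH_ofFn, mul_ite, mul_one, mul_zero,
    Finset.sum_ite_eq', Finset.mem_univ, if_true]

variable {γ : ℕ → ℝ} {μ : CCS A E}

lemma V_eq_tsum (hΓ : 0 < Gam γ (h.length + 1)) (hμ : 0 < μ.val h) :
    V γ r π μ h = (Gam γ (h.length + 1) * μ.val h)⁻¹ *
      ∑' n, γ (h.length + 1 + n) * rewardMass r π μ.val h n := by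
  rw [V, if_pos ⟨hΓ, hμ⟩, one_div]
  rfl

lemma summable_const_add (hγs : Summable γ) (t : ℕ) : Summable fun n => γ (t + n) := by
  simpa only [add_comm t] using (summable_nat_add_iff t).2 hγs

lemma summable_mul_rewardMass (hγ0 : ∀ t, 0 ≤ γ t) (hγs : Summable γ)
    (hr : ∀ e, 0 ≤ r e ∧ r e ≤ 1) (t : ℕ) :
    Summable fun n => γ (t + n) * rewardMass r π μ.val h n :=
  (summable_const_add hγs t).of_nonneg_of_le
    (fun _ => mul_nonneg (hγ0 _) (rewardMass_nonneg (fun e => (hr e).1) μ))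
    fun _ => mul_le_of_le_one_right (hγ0 _)
      ((rewardMass_le_val (fun e => (hr e).2) μ).trans (μ.le_one h))

lemma div_le_V (hγ0 : ∀ t, 0 ≤ γ t) (hγs : Summable γ) (hr : ∀ e, 0 ≤ r e ∧ r e ≤ 1)
    (hΓ : 0 < Gam γ (h.length + 1)) (hμ : 0 < μ.val h) {c : ℝ}
    (hc : ∀ n, c ≤ rewardMass r π μ.val h n) : c / μ.val h ≤ V γ r π μ h := by
  have hsum : c * Gam γ (h.length + 1) ≤
      ∑' n, γ (h.length + 1 + n) * rewardMass r π μ.val h n := by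
    rw [Gam, ← tsum_mul_left]
    exact ((summable_const_add hγs _).mul_left c).tsum_le_tsum
      (fun n => by rw [mul_comm]; exact mul_le_mul_of_nonneg_left (hc n) (hγ0 _))
      (summable_mul_rewardMass hγ0 hγs hr _)
  rw [V_eq_tsum hΓ hμ]
  calc c / μ.val h = (Gam γ (h.length + 1) * μ.val h)⁻¹ * (c * Gam γ (h.length + 1)) := by
        field_simp
    _ ≤ _ := mul_le_mul_of_nonneg_left hsum (by positivity)

lemma V_le_div (hγ0 : ∀ t, 0 ≤ γ t) (hγs : Summable γ) (hr : ∀ e, 0 ≤ r e ∧ r e ≤ 1)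
    (hΓ : 0 < Gam γ (h.length + 1)) (hμ : 0 < μ.val h) {c : ℝ}
    (hc : ∀ n, rewardMass r π μ.val h n ≤ c) : V γ r π μ h ≤ c / μ.val h := by
  have hsum : ∑' n, γ (h.length + 1 + n) * rewardMass r π μ.val h n ≤
      c * Gam γ (h.length + 1) := by
    rw [Gam, ← tsum_mul_left]
    exact (summable_mul_rewardMass hγ0 hγs hr _).tsum_le_tsum
      (fun n => by rw [mul_comm c]; exact mul_le_mul_of_nonneg_left (hc n) (hγ0 _))
      ((summable_const_add hγs _).mul_left c)
  rw [V_eq_tsum hΓ hμ]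
  calc _ ≤ (Gam γ (h.length + 1) * μ.val h)⁻¹ * (c * Gam γ (h.length + 1)) :=
        mul_le_mul_of_nonneg_left hsum (by positivity)
    _ = c / μ.val h := by field_simp

end

theorem intelligence_gap_general {A E : Type*} [Fintype E]
    (γ : ℕ → ℝ) (hγ0 : ∀ t, 0 ≤ γ t) (hγs : Summable γ)
    (r : E → ℝ) (hr : ∀ e : E, 0 ≤ r e ∧ r e ≤ 1)
    (hΓ1 : 0 < Gam γ 1)
    (e0 e1 : E) (hr0 : r e0 = 0) (hr1 : r e1 = 1)
    (α : A) (ν ξ ξ' : CCS A E)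
    (hν : ∀ h : Hist A E, ν.val h = firstEnv α e1 e0 h)
    (hξ' : ∀ h : Hist A E, ξ'.val h = 0.999 * ν.val h + 0.001 * ξ.val h) :
    (∀ π : Policy A E, π [] = α → (0.999 : ℝ) ≤ V γ r π ξ' []) ∧
    (∀ π : Policy A E, π [] ≠ α → V γ r π ξ' [] ≤ (0.001 : ℝ)) ∧
    ¬ ∃ π : Policy A E,
        (0.001 : ℝ) < V γ r π ξ' [] ∧ V γ r π ξ' [] < (0.999 : ℝ) := by
  have hξ'val : ξ'.val = fun h => 0.999 * firstEnv α e1 e0 h + 0.001 * ξ.val h :=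
    funext fun h => by rw [hξ', hν]
  have hξ0 := ξ.nonneg []
  have hξ1 := ξ.le_one []
  have hξ'0 : ξ'.val [] = 0.999 + 0.001 * ξ.val [] := by simp [hξ'val, firstEnv]
  have hpos : 0 < ξ'.val [] := by rw [hξ'0]; positivity
  have hmass : ∀ π n, rewardMass r π ξ'.val [] n =
      0.999 * r (if π [] = α then e1 else e0) + 0.001 * rewardMass r π ξ.val [] n := by
    intro π n
    rw [hξ'val, rewardMass_mul_add_mul, rewardMass_firstEnv]
  have hgood : ∀ π : Policy A E, π [] = α → (0.999 : ℝ) ≤ V γ r π ξ' [] := by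
    intro π hπ
    refine le_trans ?_ (div_le_V (h := []) hγ0 hγs hr hΓ1 hpos (c := 0.999) fun n => ?_)
    · rw [le_div_iff₀ hpos]; nlinarith
    · rw [hmass, if_pos hπ, hr1]
      linarith [rewardMass_nonneg (π := π) (h := []) (n := n) (fun e => (hr e).1) ξ]
  have hbad : ∀ π : Policy A E, π [] ≠ α → V γ r π ξ' [] ≤ (0.001 : ℝ) := by
    intro π hπ
    refine le_trans (V_le_div (h := []) hγ0 hγs hr hΓ1 hpos (c := 0.001 * ξ.val []) fun n => ?_) ?_
    · rw [hmass, if_neg hπ, hr0]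
      linarith [rewardMass_le_val (π := π) (h := []) (n := n) (fun e => (hr e).2) ξ]
    · rw [div_le_iff₀ hpos, hξ'0]; nlinarith
  refine ⟨hgood, hbad, ?_⟩
  rintro ⟨π, hlo, hhi⟩
  by_cases hπ : π [] = α
  · exact (hgood π hπ).not_gt hhi
  · exact (hbad π hπ).not_gt hlo

/-- **Intelligence gap.** With `ξ' = 0.999·ν + 0.001·ξ` where in `ν` the first action
decides between heaven and hell, intelligence scores avoid the interval `(0.001, 0.999)`. -/
theorem intelligence_gap {A E : Type*} [Fintype A] [Nonempty A] [Fintype E] [Nonempty E]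
    (γ : ℕ → ℝ) (hγ0 : ∀ t, 0 ≤ γ t) (hγs : Summable γ)
    (r : E → ℝ) (hr : ∀ e : E, 0 ≤ r e ∧ r e ≤ 1)
    (hΓ1 : 0 < Gam γ 1) (hA : ∃ a b : A, a ≠ b)
    (e0 e1 : E) (hr0 : r e0 = 0) (hr1 : r e1 = 1)
    (α : A) (ν ξ ξ' : CCS A E)
    (hν : ∀ h : Hist A E, ν.val h = firstEnv α e1 e0 h)
    (hξ' : ∀ h : Hist A E, ξ'.val h = 0.999 * ν.val h + 0.001 * ξ.val h) :
    (∀ π : Policy A E, π [] = α → (0.999 : ℝ) ≤ V γ r π ξ' []) ∧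
    (∀ π : Policy A E, π [] ≠ α → V γ r π ξ' [] ≤ (0.001 : ℝ)) ∧
    ¬ ∃ π : Policy A E,
        (0.001 : ℝ) < V γ r π ξ' [] ∧ V γ r π ξ' [] < (0.999 : ℝ) :=
  intelligence_gap_general γ hγ0 hγs r hr hΓ1 e0 e1 hr0 hr1 α ν ξ ξ' hν hξ'
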